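/- Let H : ℝ≥0 → ℝ≥0 be continuous and increasing with H(t) > 0 for t > 0 and ∫₀₊ ds/H(s) = ∞ (the integral of 1/H diverges at 0). If u, v are continuous nonnegative functions on [0,∞) with u(t) ≤ ∫₀ᵗ v(s) H(u(s)) ds for all t ≥ 0, then u(t) = 0 for all t ≥ 0. -/
import Mathlib

open MeasureTheory intervalIntegral Set Filter

/-- **Bihari's inequality, degenerate case `u₀ = 0`.** If `H` is continuous, monotone,
positive on positives and `∫₀₊ ds / H s = ∞` (i.e. `∫_ε^1 ds / H s → ∞` as `ε → 0⁺`),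
and `u, v` are continuous nonnegative functions with `u t ≤ ∫₀ᵗ v s * H (u s) ds`
for all `t ≥ 0`, then `u t = 0` for all `t ≥ 0`. -/
theorem bihari_osgood_zero
    (H : ℝ → ℝ) (hHcont : Continuous H) (hHmono : Monotone H)
    (hHpos : ∀ t : ℝ, 0 < t → 0 < H t)
    (hHdiv : Tendsto (fun ε : ℝ => ∫ s in ε..1, 1 / H s)
      (nhdsWithin 0 (Set.Ioi 0)) atTop)
    (u v : ℝ → ℝ) (hu : Continuous u) (hv : Continuous v)
    (hunn : ∀ t, 0 ≤ u t) (hvnn : ∀ t, 0 ≤ v t)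
    (hmain : ∀ t : ℝ, 0 ≤ t → u t ≤ ∫ s in (0:ℝ)..t, v s * H (u s)) :
    ∀ t : ℝ, 0 ≤ t → u t = 0 := by
  set w : ℝ → ℝ := fun t => ∫ s in (0:ℝ)..t, v s * H (u s) with hwdef
  have hcont_int : Continuous fun s => v s * H (u s) := hv.mul (hHcont.comp hu)
  have hH0 : 0 ≤ H 0 := by
    have h1 : Tendsto H (nhdsWithin 0 (Set.Ioi 0)) (nhds (H 0)) :=
      (hHcont.continuousAt).continuousWithinAt.tendsto
    exact ge_of_tendsto h1 (eventually_nhdsWithin_of_forall fun t ht => (hHpos t ht).le)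
  have hHnn : ∀ s, 0 ≤ H (u s) := fun s => hH0.trans (hHmono (hunn s))
  have hint_nn : ∀ s, 0 ≤ v s * H (u s) := fun s => mul_nonneg (hvnn s) (hHnn s)
  have hw_deriv : ∀ t, HasDerivAt w (v t * H (u t)) t := fun t =>
    (hcont_int.integral_hasStrictDerivAt 0 t).hasDerivAt
  have hwdiff : Differentiable ℝ w := fun t => (hw_deriv t).differentiableAt
  have hwcont : Continuous w := hwdiff.continuous
  have hwmono : Monotone w := by
    intro r t hrt
    have h1 : IntervalIntegrable (fun s => v s * H (u s)) volume 0 r :=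
      hcont_int.intervalIntegrable _ _
    have h2 : IntervalIntegrable (fun s => v s * H (u s)) volume r t :=
      hcont_int.intervalIntegrable _ _
    have hadd := integral_add_adjacent_intervals h1 h2
    have hnn : 0 ≤ ∫ s in r..t, v s * H (u s) :=
      intervalIntegral.integral_nonneg hrt (fun s _ => hint_nn s)
    simp only [hwdef]
    linarith [hadd]
  have hw0 : w 0 = 0 := by simp [hwdef]
  have hule : ∀ t, 0 ≤ t → u t ≤ w t := hmain
  -- the Osgood primitive F
  set F : ℝ → ℝ := fun x => ∫ s in (1:ℝ)..x, 1 / H s with hFdef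
  have hHinvconton : ∀ x : ℝ, 0 < x → ContinuousAt (fun s => 1 / H s) x := fun x hx =>
    continuousAt_const.div hHcont.continuousAt (hHpos x hx).ne'
  have hF_deriv : ∀ x : ℝ, 0 < x → HasDerivAt F (1 / H x) x := by
    intro x hx
    have hopen : IsOpen (Set.Ioi (0:ℝ)) := isOpen_Ioi
    have hconOn : ContinuousOn (fun s => 1 / H s) (Set.Ioi 0) := fun s hs =>
      (hHinvconton s hs).continuousWithinAt
    have hint : IntervalIntegrable (fun s => 1 / H s) volume 1 x := by
      apply ContinuousOn.intervalIntegrable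
      intro s hs
      have : 0 < s := lt_of_lt_of_le (lt_min one_pos hx) hs.1
      exact (hHinvconton s this).continuousWithinAt
    exact intervalIntegral.integral_hasDerivAt_right hint
      ⟨_, hopen.mem_nhds hx, (hconOn.mono (by simp)).aestronglyMeasurable hopen.measurableSet⟩
      (hHinvconton x hx)
  have hFbot : Tendsto F (nhdsWithin 0 (Set.Ioi 0)) atBot := by
    have h1 : Tendsto (fun ε : ℝ => -∫ s in ε..1, 1 / H s)
        (nhdsWithin 0 (Set.Ioi 0)) atBot := tendsto_neg_atTop_atBot.comp hHdiv
    have heq : F = fun ε : ℝ => -∫ s in ε..1, 1 / H s := by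
      funext ε
      simp only [hFdef]
      rw [intervalIntegral.integral_symm]
    rw [heq]; exact h1
  -- main argument
  intro t₀ ht₀
  by_contra hne
  have hu0 : 0 < u t₀ := (hunn t₀).lt_of_ne (Ne.symm hne)
  have hwt₀ : 0 < w t₀ := hu0.trans_le (hule t₀ ht₀)
  have ht₀pos : 0 < t₀ := by
    rcases ht₀.lt_or_eq with h | h
    · exact h
    · exfalso; rw [← h, hw0] at hwt₀; exact lt_irrefl 0 hwt₀
  set S : Set ℝ := Icc 0 t₀ ∩ w ⁻¹' {0} with hSdef
  have hScompact : IsCompact S :=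
    isCompact_Icc.inter_right (isClosed_singleton.preimage hwcont)
  have hSne : S.Nonempty := ⟨0, ⟨le_refl 0, ht₀⟩, hw0⟩
  set a := sSup S with hadef
  have haS : a ∈ S := hScompact.sSup_mem hSne
  have ha0 : 0 ≤ a := haS.1.1
  have hat₀ : a ≤ t₀ := haS.1.2
  have hwa : w a = 0 := haS.2
  have halt : a < t₀ := hat₀.lt_of_ne (fun h => hwt₀.ne' (h ▸ hwa))
  have hwpos : ∀ t, a < t → t ≤ t₀ → 0 < w t := by
    intro t hat htt₀
    have h0t : 0 ≤ w t := hw0 ▸ hwmono (ha0.trans hat.le)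
    rcases h0t.lt_or_eq with h | h
    · exact h
    · exfalso
      have : t ∈ S := ⟨⟨ha0.trans hat.le, htt₀⟩, h.symm⟩
      exact absurd (le_csSup hScompact.bddAbove this) (not_le.2 hat)
  set C : ℝ := ∫ s in a..t₀, v s with hCdef
  -- key estimate
  have key : ∀ s, a < s → s < t₀ → F (w t₀) - F (w s) ≤ C := by
    intro s has hst₀
    set g : ℝ → ℝ := fun t => (∫ r in a..t, v r) - F (w t) with hgdef
    have hws : 0 < w s := hwpos s has hst₀.le
    have hg_deriv : ∀ t, 0 < w t →
        HasDerivAt g (v t - 1 / H (w t) * (v t * H (u t))) t := fun t hwt =>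
      ((hv.integral_hasStrictDerivAt a t).hasDerivAt).sub
        (((hF_deriv (w t) hwt).comp t (hw_deriv t)))
    have hmonog : MonotoneOn g (Icc s t₀) := by
      apply monotoneOn_of_deriv_nonneg (convex_Icc s t₀)
      · intro t ht
        have hwt : 0 < w t := hws.trans_le (hwmono ht.1)
        exact ((hg_deriv t hwt).continuousAt).continuousWithinAt
      · rw [interior_Icc]
        intro t ht
        have hwt : 0 < w t := hws.trans_le (hwmono ht.1.le)
        exact ((hg_deriv t hwt).differentiableAt).differentiableWithinAt
      · rw [interior_Icc]
        intro t ht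
        have hwt : 0 < w t := hws.trans_le (hwmono ht.1.le)
        rw [(hg_deriv t hwt).deriv]
        have htnn : 0 ≤ t := ha0.trans (has.trans ht.1).le
        have h1 : H (u t) ≤ H (w t) := hHmono (hule t htnn)
        have h2 : v t * H (u t) ≤ v t * H (w t) :=
          mul_le_mul_of_nonneg_left h1 (hvnn t)
        have hHwt : 0 < H (w t) := hHpos _ hwt
        have h3 : 1 / H (w t) * (v t * H (u t)) ≤ 1 / H (w t) * (v t * H (w t)) :=
          mul_le_mul_of_nonneg_left h2 (one_div_nonneg.2 hHwt.le)
        have h4 : 1 / H (w t) * (v t * H (w t)) = v t := by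
          rw [one_div, inv_mul_eq_div, mul_div_assoc, div_self hHwt.ne', mul_one]
        linarith
    have hgs := hmonog ⟨le_refl s, hst₀.le⟩ ⟨hst₀.le, le_refl t₀⟩ hst₀.le
    simp only [hgdef] at hgs
    have h0 : 0 ≤ ∫ r in a..s, v r :=
      intervalIntegral.integral_nonneg has.le (fun r _ => hvnn r)
    simp only [hCdef]
    linarith
  -- limit argument
  haveI hne2 : (nhdsWithin a (Ioo a t₀)).NeBot := by
    apply mem_closure_iff_nhdsWithin_neBot.1
    rw [closure_Ioo halt.ne]
    exact ⟨le_refl a, halt.le⟩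
  have hlim_w : Tendsto w (nhdsWithin a (Ioo a t₀)) (nhdsWithin 0 (Set.Ioi 0)) := by
    rw [tendsto_nhdsWithin_iff]
    constructor
    · have := (hwcont.tendsto a).mono_left (nhdsWithin_le_nhds (s := Ioo a t₀))
      rwa [hwa] at this
    · exact eventually_nhdsWithin_of_forall fun s hs => hwpos s hs.1 hs.2.le
  have hcomp : Tendsto (fun s => F (w s)) (nhdsWithin a (Ioo a t₀)) atBot :=
    hFbot.comp hlim_w
  have hev1 : ∀ᶠ s in nhdsWithin a (Ioo a t₀), F (w s) < F (w t₀) - C :=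
    hcomp.eventually (eventually_lt_atBot _)
  have hev2 : ∀ᶠ s in nhdsWithin a (Ioo a t₀), F (w t₀) - F (w s) ≤ C :=
    eventually_nhdsWithin_of_forall fun s hs => key s hs.1 hs.2
  rcases (hev1.and hev2).exists with ⟨s, h1, h2⟩
  linarith
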